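/- arXiv:2003.13512 — 4 statements merged into one kernel-verified Lean document; each statement's English description precedes it below -/
import Mathlib

section
/- Let f* : ℝ⁸ × ℝ⁸ → ℝ be defined on the open set {(x,y) : ‖y‖² − ‖x‖² > 0} by f*(x,y) = y₁ · (‖y‖² − ‖x‖²)^(−1/2), where y₁ denotes a fixed coordinate of y and ‖·‖ is the Euclidean norm. Then at every point (x,y) with ‖y‖² − ‖x‖² > 0 one has ∑_{i=0}^{7} (∂²f*/∂x_i² − ∂²f*/∂y_i²)(x,y) = 15 · y₁ · (‖y‖² − ‖x‖²)^(−3/2). In particular, on the quadric {‖y‖² − ‖x‖² = 1} the flat d'Alembertian of f* equals 15 y₁. -/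
open Real

/-- `fstar x y = y₁ · (‖y‖² − ‖x‖²)^(−1/2)`, written in coordinates on `ℝ⁸ × ℝ⁸`. -/
noncomputable def fstar (x y : Fin 8 → ℝ) : ℝ :=
  y 1 * (∑ j, (y j) ^ 2 - ∑ j, (x j) ^ 2) ^ (-(1 : ℝ) / 2)

/-!
On a coordinate line, `f* = y₁ Q^{-1/2}` with `Q = ‖y‖² - ‖x‖²` has the form
`(c + δ t)(a + ε t²)^{-1/2}`, with `ε = -1` in the `x`-directions, `ε = 1` in the `y`-directions,
and `δ = 1` only in the direction `y₁`; its second derivative is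
`-ε (c + 3δt) Q^{-3/2} + 3 t² (c + δt) Q^{-5/2}`. In the signed sum over all `2n` directions the
`Q^{-5/2}` terms add up to `3 y₁ (‖x‖² - ‖y‖²) Q^{-5/2} = -3 y₁ Q^{-3/2}` and the `Q^{-3/2}` terms
to `(2n + 2) y₁ Q^{-3/2}`, leaving `(2n - 1) y₁ Q^{-3/2}`.
-/

open Function Topology

theorem Finset.sum_sq_update {ι : Type*} [Fintype ι] [DecidableEq ι] (x : ι → ℝ) (i : ι) (s : ℝ) :
    ∑ j, update x i s j ^ 2 = ∑ j, x j ^ 2 - x i ^ 2 + s ^ 2 := by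
  rw [show (fun j => update x i s j ^ 2) = update (fun j => x j ^ 2) i (s ^ 2) from
      comp_update (· ^ 2) x i s, Finset.sum_update_of_mem (Finset.mem_univ i),
    Finset.sum_eq_add_sum_sdiff_singleton_of_mem (Finset.mem_univ i) (fun j => x j ^ 2)]
  ring

theorem hasDerivAt_affine_mul_rpow (u v a ε p t : ℝ) (h : a + ε * t ^ 2 ≠ 0) :
    HasDerivAt (fun t => (u + v * t) * (a + ε * t ^ 2) ^ p)
      (v * (a + ε * t ^ 2) ^ p + 2 * p * ε * t * (u + v * t) * (a + ε * t ^ 2) ^ (p - 1)) t := by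
  have hq : HasDerivAt (fun t => a + ε * t ^ 2) (ε * (2 * t)) t := by
    simpa using ((hasDerivAt_pow 2 t).const_mul ε).const_add a
  have hl : HasDerivAt (fun t => u + v * t) v t := by
    simpa using ((hasDerivAt_id t).const_mul v).const_add u
  refine (hl.mul (hq.rpow_const (p := p) (Or.inl h))).congr_deriv ?_
  ring

theorem deriv_deriv_affine_mul_rpow_neg_half (c δ a ε t : ℝ) (h : 0 < a + ε * t ^ 2) :
    deriv (deriv fun t => (c + δ * t) * (a + ε * t ^ 2) ^ (-(1 : ℝ) / 2)) t
      = -ε * (c + 3 * δ * t) * (a + ε * t ^ 2) ^ (-(3 : ℝ) / 2)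
        + 3 * ε ^ 2 * t ^ 2 * (c + δ * t) * (a + ε * t ^ 2) ^ (-(5 : ℝ) / 2) := by
  -- the first derivative is again an affine function times a power of `a + ε t²`
  have hfirst : ∀ s, 0 < a + ε * s ^ 2 → HasDerivAt
      (fun t => (c + δ * t) * (a + ε * t ^ 2) ^ (-(1 : ℝ) / 2))
      ((δ * a + -(ε * c) * s) * (a + ε * s ^ 2) ^ (-(3 : ℝ) / 2)) s := by
    intro s hs
    refine (hasDerivAt_affine_mul_rpow c δ a ε (-(1 : ℝ) / 2) s hs.ne').congr_deriv ?_
    rw [show -(1 : ℝ) / 2 = -(3 : ℝ) / 2 + 1 by norm_num, rpow_add_one hs.ne']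
    norm_num
    ring
  have hq : ContinuousAt (fun s => a + ε * s ^ 2) t := by fun_prop
  have hderiv : deriv (fun t => (c + δ * t) * (a + ε * t ^ 2) ^ (-(1 : ℝ) / 2)) =ᶠ[𝓝 t]
      fun s => (δ * a + -(ε * c) * s) * (a + ε * s ^ 2) ^ (-(3 : ℝ) / 2) :=
    (continuousAt_const.eventually_lt hq h).mono fun s hs => (hfirst s hs).deriv
  rw [hderiv.deriv_eq,
    (hasDerivAt_affine_mul_rpow (δ * a) (-(ε * c)) a ε (-(3 : ℝ) / 2) t h.ne').deriv,
    show -(3 : ℝ) / 2 = -(5 : ℝ) / 2 + 1 by norm_num, rpow_add_one h.ne']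
  norm_num
  ring

section

variable {ι : Type*} [Fintype ι]

noncomputable def neutralNormSq (x y : ι → ℝ) : ℝ := ∑ j, y j ^ 2 - ∑ j, x j ^ 2

noncomputable def normalizedCoord (k : ι) (x y : ι → ℝ) : ℝ :=
  y k * neutralNormSq x y ^ (-(1 : ℝ) / 2)

variable [DecidableEq ι] (x y : ι → ℝ) (i k : ι)

theorem deriv_deriv_normalizedCoord_update_left (h : 0 < neutralNormSq x y) :
    deriv (deriv fun s => normalizedCoord k (update x i s) y) (x i)
      = y k * neutralNormSq x y ^ (-(3 : ℝ) / 2)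
        + 3 * y k * x i ^ 2 * neutralNormSq x y ^ (-(5 : ℝ) / 2) := by
  have hline : (fun s => normalizedCoord k (update x i s) y) = fun s =>
      (y k + 0 * s) * ((neutralNormSq x y + x i ^ 2) + (-1) * s ^ 2) ^ (-(1 : ℝ) / 2) := by
    funext s
    rw [normalizedCoord, neutralNormSq, Finset.sum_sq_update, neutralNormSq]
    ring_nf
  have hq : neutralNormSq x y + x i ^ 2 + (-1) * x i ^ 2 = neutralNormSq x y := by ring
  rw [hline, deriv_deriv_affine_mul_rpow_neg_half _ _ _ _ _ (by rwa [hq]), hq]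
  ring

theorem deriv_deriv_normalizedCoord_update_right (h : 0 < neutralNormSq x y) :
    deriv (deriv fun s => normalizedCoord k x (update y i s)) (y i)
      = -(if i = k then 3 else 1) * y k * neutralNormSq x y ^ (-(3 : ℝ) / 2)
        + 3 * y k * y i ^ 2 * neutralNormSq x y ^ (-(5 : ℝ) / 2) := by
  have hq : neutralNormSq x y - y i ^ 2 + 1 * y i ^ 2 = neutralNormSq x y := by ring
  have hpos : 0 < neutralNormSq x y - y i ^ 2 + 1 * y i ^ 2 := by rwa [hq]
  by_cases hik : i = k
  · subst hik
    have hline : (fun s => normalizedCoord i x (update y i s)) = fun s =>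
        (0 + 1 * s) * ((neutralNormSq x y - y i ^ 2) + 1 * s ^ 2) ^ (-(1 : ℝ) / 2) := by
      funext s
      rw [normalizedCoord, neutralNormSq, Finset.sum_sq_update, neutralNormSq, update_self]
      ring_nf
    rw [hline, deriv_deriv_affine_mul_rpow_neg_half _ _ _ _ _ hpos, hq, if_pos rfl]
    ring
  · have hline : (fun s => normalizedCoord k x (update y i s)) = fun s =>
        (y k + 0 * s) * ((neutralNormSq x y - y i ^ 2) + 1 * s ^ 2) ^ (-(1 : ℝ) / 2) := by
      funext s
      rw [normalizedCoord, neutralNormSq, Finset.sum_sq_update, neutralNormSq,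
        update_of_ne (Ne.symm hik)]
      ring_nf
    rw [hline, deriv_deriv_affine_mul_rpow_neg_half _ _ _ _ _ hpos, hq, if_neg hik]
    ring

theorem dalembertian_normalizedCoord (h : 0 < neutralNormSq x y) :
    ∑ i, (deriv (deriv fun s => normalizedCoord k (update x i s) y) (x i)
        - deriv (deriv fun s => normalizedCoord k x (update y i s)) (y i))
      = (2 * Fintype.card ι - 1) * y k * neutralNormSq x y ^ (-(3 : ℝ) / 2) := by
  have hcard : ∑ i, (if i = k then (3 : ℝ) else 1) = Fintype.card ι + 2 := by
    rw [Finset.sum_ite]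
    simp [Finset.filter_eq', Finset.filter_ne',
      Nat.cast_sub (Fintype.card_pos_iff.mpr ⟨k⟩)]
    ring
  have hpow : neutralNormSq x y ^ (-(3 : ℝ) / 2)
      = (∑ j, y j ^ 2 - ∑ j, x j ^ 2) * neutralNormSq x y ^ (-(5 : ℝ) / 2) := by
    rw [show -(3 : ℝ) / 2 = -(5 : ℝ) / 2 + 1 by norm_num, rpow_add_one h.ne', mul_comm]
    rfl
  simp only [deriv_deriv_normalizedCoord_update_left x y _ k h,
    deriv_deriv_normalizedCoord_update_right x y _ k h, Finset.sum_sub_distrib,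
    Finset.sum_add_distrib, ← Finset.sum_mul, ← Finset.mul_sum, neg_mul,
    Finset.sum_neg_distrib, hcard, Finset.sum_const, Finset.card_univ, nsmul_eq_mul]
  rw [hpow]
  ring

end

/-- The flat d'Alembertian of signature (8,8) applied to
`f*(x,y) = y₁ (‖y‖² − ‖x‖²)^{-1/2}` equals `15 y₁ (‖y‖² − ‖x‖²)^{-3/2}` wherever
`‖y‖² − ‖x‖² > 0`; in particular on the quadric `‖y‖² − ‖x‖² = 1` it equals `15 y₁`. -/
theorem dalembertian_fstar (x y : Fin 8 → ℝ)
    (h : (∑ j, (y j) ^ 2) - ∑ j, (x j) ^ 2 > 0) :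
    (∑ i, (deriv (deriv (fun s => fstar (Function.update x i s) y)) (x i)
        - deriv (deriv (fun s => fstar x (Function.update y i s))) (y i))
      = 15 * y 1 * ((∑ j, (y j) ^ 2 - ∑ j, (x j) ^ 2) ^ (-(3 : ℝ) / 2))) ∧
    ((∑ j, (y j) ^ 2) - ∑ j, (x j) ^ 2 = 1 →
      (∑ i, (deriv (deriv (fun s => fstar (Function.update x i s) y)) (x i)
        - deriv (deriv (fun s => fstar x (Function.update y i s))) (y i)))
      = 15 * y 1) := by
  rw [show fstar = normalizedCoord 1 from rfl,
    show ∑ j, y j ^ 2 - ∑ j, x j ^ 2 = neutralNormSq x y from rfl] at *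
  have hdal := dalembertian_normalizedCoord x y 1 h
  refine ⟨by rw [hdal]; norm_num, fun hquadric => ?_⟩
  rw [hdal, hquadric, one_rpow]
  norm_num
end

section
/- Fix m ∈ ℕ and define h_m : (0,π) → ℂ by h_m(η) = (15/16) ∫₀^π (cos η + i·sin η·cos φ)^m · sin⁵φ dφ. Then h_m is twice differentiable and h_m''(η) + 6 cot η · h_m'(η) = −m(m+6)·h_m(η) for all η ∈ (0,π). -/
/-!
Write `w = cos η + i sin η cos φ` and `w' = ∂_η w = -sin η + i cos η cos φ`, so that `∂_η w' = -w`,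
`w'² + w² = sin² φ` and `sin η · w + cos η · w' = i cos φ`. Differentiating under the integral sign,
these identities turn `sin η · (∂²_η + (k+1) cot η ∂_η + m(m+k+1)) (w^m sin^k φ)` into the exact
`φ`-derivative of `m i w^(m-1) sin^(k+1) φ`, which vanishes at `φ = 0` and `φ = π`. The theorem is
the case `k = 5` (the sphere `𝕊⁷`); the normalising constant `15/16` is irrelevant, the equation
being linear.
-/

open Real Complex

/-- The eigenfunction `h_m(η) = (15/16) ∫₀^π (cos η + i sin η cos φ)^m sin⁵φ dφ`. -/
noncomputable def sphericalEigenfunction (m : ℕ) (η : ℝ) : ℂ :=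
  (15 / 16 : ℂ) * ∫ φ in (0 : ℝ)..π,
    ((Real.cos η : ℂ) + Complex.I * (Real.sin η : ℂ) * (Real.cos φ : ℂ)) ^ m
      * (Real.sin φ : ℂ) ^ 5

open Metric Set in
theorem intervalIntegral.hasDerivAt_integral_of_continuous {𝕜 E : Type*} [RCLike 𝕜]
    [NormedAddCommGroup E] [NormedSpace ℝ E] [NormedSpace 𝕜 E] {a b : ℝ} {F F' : 𝕜 → ℝ → E}
    (hF : ∀ x, Continuous (F x)) (hF' : Continuous (Function.uncurry F'))
    (hderiv : ∀ x t, HasDerivAt (F · t) (F' x t) x) (x₀ : 𝕜) :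
    HasDerivAt (fun x => ∫ t in a..b, F x t) (∫ t in a..b, F' x₀ t) x₀ := by
  obtain ⟨C, hC⟩ := ((isCompact_closedBall x₀ 1).prod isCompact_uIcc).exists_bound_of_continuousOn
    hF'.continuousOn
  refine (hasDerivAt_integral_of_dominated_loc_of_deriv_le (bound := fun _ => C)
    (ball_mem_nhds x₀ one_pos) (.of_forall fun x => (hF x).aestronglyMeasurable)
    ((hF x₀).intervalIntegrable _ _) (hF'.uncurry_left x₀).aestronglyMeasurable
    (.of_forall fun t ht x hx => hC (x, t) ⟨ball_subset_closedBall hx, uIoc_subset_uIcc ht⟩)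
    intervalIntegrable_const (.of_forall fun t _ x _ => hderiv x t)).2

noncomputable section

def laplaceBase (η φ : ℝ) : ℂ := Real.cos η + I * Real.sin η * Real.cos φ

def laplaceBaseDeriv (η φ : ℝ) : ℂ := -Real.sin η + I * Real.cos η * Real.cos φ

theorem hasDerivAt_laplaceBase (η φ : ℝ) :
    HasDerivAt (laplaceBase · φ) (laplaceBaseDeriv η φ) η := by
  have := (Real.hasDerivAt_cos η).ofReal_comp.add
    (((Real.hasDerivAt_sin η).ofReal_comp.const_mul I).mul_const (Real.cos φ : ℂ))
  refine this.congr_deriv ?_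
  simp only [laplaceBaseDeriv]; push_cast; ring

theorem hasDerivAt_laplaceBaseDeriv (η φ : ℝ) :
    HasDerivAt (laplaceBaseDeriv · φ) (-laplaceBase η φ) η := by
  have := (Real.hasDerivAt_sin η).ofReal_comp.neg.add
    (((Real.hasDerivAt_cos η).ofReal_comp.const_mul I).mul_const (Real.cos φ : ℂ))
  refine this.congr_deriv ?_
  simp only [laplaceBase]; push_cast; ring

theorem hasDerivAt_laplaceBase_right (η φ : ℝ) :
    HasDerivAt (laplaceBase η) (-I * Real.sin η * Real.sin φ) φ := by
  have := ((Real.hasDerivAt_cos φ).ofReal_comp.const_mul (I * Real.sin η)).const_add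
    (Real.cos η : ℂ)
  refine this.congr_deriv ?_
  push_cast; ring

theorem laplaceBaseDeriv_sq_add_laplaceBase_sq (η φ : ℝ) :
    laplaceBaseDeriv η φ ^ 2 + laplaceBase η φ ^ 2 = Real.sin φ ^ 2 := by
  simp only [laplaceBase, laplaceBaseDeriv, ofReal_cos, ofReal_sin]
  linear_combination (1 - Complex.cos φ ^ 2) * Complex.cos_sq_add_sin_sq (η : ℂ)
    - Complex.cos_sq_add_sin_sq (φ : ℂ)
    + (Complex.cos η ^ 2 + Complex.sin η ^ 2) * Complex.cos φ ^ 2 * I_sq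

theorem sin_mul_laplaceBase_add_cos_mul_laplaceBaseDeriv (η φ : ℝ) :
    Real.sin η * laplaceBase η φ + Real.cos η * laplaceBaseDeriv η φ = I * Real.cos φ := by
  simp only [laplaceBase, laplaceBaseDeriv, ofReal_cos, ofReal_sin]
  linear_combination I * Complex.cos φ * Complex.cos_sq_add_sin_sq (η : ℂ)

def laplaceIntegrand (k m : ℕ) (η φ : ℝ) : ℂ := laplaceBase η φ ^ m * (Real.sin φ : ℂ) ^ k

def laplaceIntegrandDeriv (k m : ℕ) (η φ : ℝ) : ℂ :=
  m * laplaceBase η φ ^ (m - 1) * laplaceBaseDeriv η φ * (Real.sin φ : ℂ) ^ k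

def laplaceIntegrandSecondDeriv (k m : ℕ) (η φ : ℝ) : ℂ :=
  (m * (m - 1 : ℕ) * laplaceBase η φ ^ (m - 1 - 1) * laplaceBaseDeriv η φ ^ 2
    - m * laplaceBase η φ ^ (m - 1) * laplaceBase η φ) * (Real.sin φ : ℂ) ^ k

def laplaceIntegral (k m : ℕ) (η : ℝ) : ℂ := ∫ φ in (0 : ℝ)..π, laplaceIntegrand k m η φ

variable (k m : ℕ)

theorem continuous_laplaceIntegrand : Continuous (Function.uncurry (laplaceIntegrand k m)) := by
  unfold laplaceIntegrand laplaceBase; fun_prop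

theorem continuous_laplaceIntegrandDeriv :
    Continuous (Function.uncurry (laplaceIntegrandDeriv k m)) := by
  unfold laplaceIntegrandDeriv laplaceBase laplaceBaseDeriv; fun_prop

theorem continuous_laplaceIntegrandSecondDeriv :
    Continuous (Function.uncurry (laplaceIntegrandSecondDeriv k m)) := by
  unfold laplaceIntegrandSecondDeriv laplaceBase laplaceBaseDeriv; fun_prop

theorem hasDerivAt_laplaceIntegrand (η φ : ℝ) :
    HasDerivAt (laplaceIntegrand k m · φ) (laplaceIntegrandDeriv k m η φ) η :=
  ((hasDerivAt_laplaceBase η φ).fun_pow m).mul_const _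

theorem hasDerivAt_laplaceIntegrandDeriv (η φ : ℝ) :
    HasDerivAt (laplaceIntegrandDeriv k m · φ) (laplaceIntegrandSecondDeriv k m η φ) η := by
  refine ((((hasDerivAt_laplaceBase η φ).fun_pow (m - 1)).const_mul (m : ℂ)).mul
    (hasDerivAt_laplaceBaseDeriv η φ)).mul_const _ |>.congr_deriv ?_
  simp only [laplaceIntegrandSecondDeriv]; ring

theorem hasDerivAt_laplaceIntegral (η : ℝ) :
    HasDerivAt (laplaceIntegral k m) (∫ φ in (0 : ℝ)..π, laplaceIntegrandDeriv k m η φ) η :=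
  intervalIntegral.hasDerivAt_integral_of_continuous
    (continuous_laplaceIntegrand k m).uncurry_left (continuous_laplaceIntegrandDeriv k m)
    (hasDerivAt_laplaceIntegrand k m) η

theorem hasDerivAt_integral_laplaceIntegrandDeriv (η : ℝ) :
    HasDerivAt (fun η => ∫ φ in (0 : ℝ)..π, laplaceIntegrandDeriv k m η φ)
      (∫ φ in (0 : ℝ)..π, laplaceIntegrandSecondDeriv k m η φ) η :=
  intervalIntegral.hasDerivAt_integral_of_continuous
    (continuous_laplaceIntegrandDeriv k m).uncurry_left
    (continuous_laplaceIntegrandSecondDeriv k m)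
    (hasDerivAt_laplaceIntegrandDeriv k m) η

def laplaceBoundaryTerm (k m : ℕ) (η φ : ℝ) : ℂ :=
  m * I * laplaceBase η φ ^ (m - 1) * (Real.sin φ : ℂ) ^ (k + 1)

theorem hasDerivAt_laplaceBoundaryTerm (η φ : ℝ) :
    HasDerivAt (laplaceBoundaryTerm k m η)
      (Real.sin η * laplaceIntegrandSecondDeriv k m η φ
        + (k + 1) * Real.cos η * laplaceIntegrandDeriv k m η φ
        + m * (m + k + 1) * Real.sin η * laplaceIntegrand k m η φ) φ := by
  refine ((((hasDerivAt_laplaceBase_right η φ).fun_pow (m - 1)).const_mul ((m : ℂ) * I)).mul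
    ((Real.hasDerivAt_sin φ).ofReal_comp.fun_pow (k + 1))) |>.congr_deriv ?_
  have hsq := laplaceBaseDeriv_sq_add_laplaceBase_sq η φ
  have hlin := sin_mul_laplaceBase_add_cos_mul_laplaceBaseDeriv η φ
  simp only [laplaceIntegrand, laplaceIntegrandDeriv, laplaceIntegrandSecondDeriv,
    Nat.add_sub_cancel, Nat.cast_add, Nat.cast_one]
  -- `m - 1` and `m - 1 - 1` are truncated subtractions, so `m = 0, 1` are handled apart
  rcases m with _ | _ | n
  · simp
  · simp only [Nat.cast_zero, Nat.sub_self, Nat.zero_sub, pow_zero]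
    linear_combination (-(k + 1) * (Real.sin φ : ℂ) ^ k) * hlin
  · simp only [Nat.add_sub_cancel, Nat.cast_add, Nat.cast_one]
    linear_combination (-((n : ℂ) + 2) * (n + 1) * Real.sin η * (Real.sin φ : ℂ) ^ k
        * laplaceBase η φ ^ n) * hsq
      - (k + 1) * (n + 2) * laplaceBase η φ ^ (n + 1) * (Real.sin φ : ℂ) ^ k * hlin
      - ((n : ℂ) + 2) * (n + 1) * laplaceBase η φ ^ n * Real.sin η * (Real.sin φ : ℂ) ^ (k + 2)
        * I_sq

theorem laplaceIntegral_ode (η : ℝ) :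
    Real.sin η * (∫ φ in (0 : ℝ)..π, laplaceIntegrandSecondDeriv k m η φ)
      + (k + 1) * Real.cos η * (∫ φ in (0 : ℝ)..π, laplaceIntegrandDeriv k m η φ)
      + m * (m + k + 1) * Real.sin η * laplaceIntegral k m η = 0 := by
  have hcont₀ := (continuous_laplaceIntegrand k m).uncurry_left η
  have hcont₁ := (continuous_laplaceIntegrandDeriv k m).uncurry_left η
  have hcont₂ := (continuous_laplaceIntegrandSecondDeriv k m).uncurry_left η
  have hboundary := intervalIntegral.integral_eq_sub_of_hasDerivAt
    (a := 0) (b := π) (fun φ _ => hasDerivAt_laplaceBoundaryTerm k m η φ)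
    (Continuous.intervalIntegrable (by fun_prop) _ _)
  simp only [laplaceBoundaryTerm, Real.sin_pi, Real.sin_zero, ofReal_zero,
    zero_pow k.succ_ne_zero, mul_zero, sub_zero] at hboundary
  rwa [intervalIntegral.integral_add, intervalIntegral.integral_add,
    intervalIntegral.integral_const_mul, intervalIntegral.integral_const_mul,
    intervalIntegral.integral_const_mul] at hboundary
  all_goals exact Continuous.intervalIntegrable (by fun_prop) _ _

end

/-- `h_m` is twice differentiable on `(0,π)` and satisfies
`h_m'' + 6 cot η · h_m' = −m(m+6) h_m` there. -/
theorem sphericalEigenfunction_ode (m : ℕ) :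
    ∀ η ∈ Set.Ioo (0 : ℝ) π,
      DifferentiableAt ℝ (sphericalEigenfunction m) η ∧
      DifferentiableAt ℝ (deriv (sphericalEigenfunction m)) η ∧
      deriv (deriv (sphericalEigenfunction m)) η
        + 6 * (Real.cot η : ℂ) * deriv (sphericalEigenfunction m) η
        = -((m : ℂ) * ((m : ℂ) + 6)) * sphericalEigenfunction m η := by
  rintro η ⟨hη₀, hηπ⟩
  have hfun : sphericalEigenfunction m = fun η => 15 / 16 * laplaceIntegral 5 m η := rfl
  have hfirst (x : ℝ) := (hasDerivAt_laplaceIntegral 5 m x).const_mul (15 / 16 : ℂ)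
  have hderiv : deriv (sphericalEigenfunction m)
      = fun x => 15 / 16 * ∫ φ in (0 : ℝ)..π, laplaceIntegrandDeriv 5 m x φ :=
    funext fun x => (hfirst x).deriv
  have hsecond := (hasDerivAt_integral_laplaceIntegrandDeriv 5 m η).const_mul (15 / 16 : ℂ)
  refine ⟨(hfirst η).differentiableAt, hderiv ▸ hsecond.differentiableAt, ?_⟩
  have hsin : (Real.sin η : ℂ) ≠ 0 := ofReal_ne_zero.2 (sin_pos_of_pos_of_lt_pi hη₀ hηπ).ne'
  have hode := laplaceIntegral_ode 5 m η
  rw [hderiv, hsecond.deriv, hfun, Real.cot_eq_cos_div_sin, ofReal_div]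
  field_simp
  simp only [Nat.cast_ofNat] at hode
  linear_combination hode
end

section
/- For every n ∈ ℕ and every x ∈ ℝ, ∑_{k=0}^{n} [ (n)_k · (−n)_k / ( (1/2)_k · k! ) ] · ((1 − x)/2)^k = T_n(x), where (a)_k = a(a+1)⋯(a+k−1) denotes the rising factorial (with (a)_0 = 1) and T_n is the n-th Chebyshev polynomial of the first kind. -/
open Real Finset


noncomputable def chebA (n k : ℕ) : ℝ :=
  (∏ j ∈ Finset.range k, ((n : ℝ) + j)) * (∏ j ∈ Finset.range k, (-(n : ℝ) + j))
    / ((∏ j ∈ Finset.range k, ((1 : ℝ) / 2 + j)) * (Nat.factorial k : ℝ))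

lemma chebA_zero (n : ℕ) : chebA n 0 = 1 := by simp [chebA]

lemma chebA_eq_zero {n k : ℕ} (h : n < k) : chebA n k = 0 := by
  have : ∏ j ∈ Finset.range k, (-(n : ℝ) + j) = 0 :=
    Finset.prod_eq_zero (Finset.mem_range.2 h) (by push_cast; ring)
  simp [chebA, this]

set_option maxHeartbeats 1600000 in
lemma chebA_rec (n k : ℕ) :
    chebA (n + 2) (k + 1)
      = 2 * chebA (n + 1) (k + 1) - 4 * chebA (n + 1) k - chebA n (k + 1) := by
  have hd : (0:ℝ) < ∏ j ∈ Finset.range k, ((1 : ℝ) / 2 + j) :=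
    Finset.prod_pos (fun j _ => by positivity)
  have hf : ((Nat.factorial k : ℝ)) ≠ 0 := by positivity
  have hn1 : ((n:ℝ) + 1) ≠ 0 := by positivity
  have hn1' : (-(n:ℝ) - 1) ≠ 0 := by intro h; apply hn1; linarith
  unfold chebA
  push_cast
  set u := ∏ j ∈ Finset.range k, ((n : ℝ) + 1 + j) with hu
  set v := ∏ j ∈ Finset.range k, (-((n : ℝ) + 1) + j) with hv
  set d := ∏ j ∈ Finset.range k, ((1 : ℝ) / 2 + j) with hdd
  have c1 : ∀ j ∈ Finset.range (k+1), ((n:ℝ) + 1 + ↑(j+1)) = (n:ℝ) + 2 + j :=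
    fun j _ => by push_cast; ring
  have c2 : ∀ j ∈ Finset.range k, (-((n:ℝ) + 2) + ↑(j+1)) = -((n:ℝ)+1) + j :=
    fun j _ => by push_cast; ring
  have c5 : ∀ j ∈ Finset.range k, ((n:ℝ) + ↑(j+1)) = (n:ℝ) + 1 + j :=
    fun j _ => by push_cast; ring
  have c6 : ∀ j ∈ Finset.range (k+1), (-((n:ℝ)+1) + ↑(j+1)) = -(n:ℝ) + j :=
    fun j _ => by push_cast; ring
  have e1 : (∏ j ∈ Finset.range (k+1), ((n : ℝ) + 2 + j)) * ((n:ℝ)+1)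
      = u * ((n:ℝ)+1+k) * ((n:ℝ)+2+k) := by
    have w : ∏ j ∈ Finset.range (k+2), ((n : ℝ) + 1 + j)
        = u * ((n:ℝ)+1+k) * ((n:ℝ)+2+k) := by
      rw [Finset.prod_range_succ, Finset.prod_range_succ]; push_cast; ring
    rw [Finset.prod_range_succ', Finset.prod_congr rfl c1] at w
    rw [← w]; push_cast; ring
  have e2 : (∏ j ∈ Finset.range (k+1), (-((n : ℝ) + 2) + j)) = v * (-(n:ℝ)-2) := by
    rw [Finset.prod_range_succ', Finset.prod_congr rfl c2]; push_cast; ring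
  have e3 : (∏ j ∈ Finset.range (k+1), ((n : ℝ) + 1 + j)) = u * ((n:ℝ)+1+k) := by
    rw [Finset.prod_range_succ]
  have e4 : (∏ j ∈ Finset.range (k+1), (-((n : ℝ) + 1) + j)) = v * ((k:ℝ)-n-1) := by
    rw [Finset.prod_range_succ]; push_cast; ring
  have e5 : (∏ j ∈ Finset.range (k+1), ((n : ℝ) + j)) = (n:ℝ) * u := by
    rw [Finset.prod_range_succ', Finset.prod_congr rfl c5]; push_cast; ring
  have e6 : (∏ j ∈ Finset.range (k+1), (-(n : ℝ) + j)) * (-(n:ℝ)-1)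
      = v * ((k:ℝ)-n-1) * ((k:ℝ)-n) := by
    have w : ∏ j ∈ Finset.range (k+2), (-((n : ℝ)+1) + j)
        = v * ((k:ℝ)-n-1) * ((k:ℝ)-n) := by
      rw [Finset.prod_range_succ, Finset.prod_range_succ]; push_cast; ring
    rw [Finset.prod_range_succ', Finset.prod_congr rfl c6] at w
    rw [← w]; push_cast; ring
  have e7 : (∏ j ∈ Finset.range (k+1), ((1 : ℝ) / 2 + j)) = d * ((1:ℝ)/2+k) := by
    rw [Finset.prod_range_succ]
  have e8 : ((Nat.factorial (k+1) : ℝ)) = (Nat.factorial k : ℝ) * (k+1) := by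
    rw [Nat.factorial_succ]; push_cast; ring
  have e1' : (∏ j ∈ Finset.range (k+1), ((n : ℝ) + 2 + j))
      = u * ((n:ℝ)+1+k) * ((n:ℝ)+2+k) / ((n:ℝ)+1) := by
    rw [eq_div_iff hn1]; exact e1
  have e6' : (∏ j ∈ Finset.range (k+1), (-(n : ℝ) + j))
      = v * ((k:ℝ)-n-1) * ((k:ℝ)-n) / (-(n:ℝ)-1) := by
    rw [eq_div_iff hn1']; exact e6
  rw [e1', e2, e3, e4, e5, e6', e7, e8]
  have hd' : d ≠ 0 := ne_of_gt hd
  have hk1 : ((1:ℝ)/2 + (k:ℝ)) ≠ 0 := by positivity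
  have hk2 : ((k:ℝ) + 1) ≠ 0 := by positivity
  field_simp
  ring

lemma cheb_pair (x : ℝ) : ∀ n : ℕ,
    (∑ k ∈ Finset.range (n + 1), chebA n k * ((1 - x) / 2) ^ k
        = (Polynomial.Chebyshev.T ℝ (n : ℤ)).eval x)
    ∧ (∑ k ∈ Finset.range (n + 2), chebA (n+1) k * ((1 - x) / 2) ^ k
        = (Polynomial.Chebyshev.T ℝ ((n:ℤ) + 1)).eval x) := by
  intro n
  induction n with
  | zero =>
    constructor
    · simp [chebA, Polynomial.Chebyshev.T_zero]
    · rw [Finset.sum_range_succ, Finset.sum_range_one, chebA_zero]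
      have h1 : chebA 1 1 = -2 := by
        simp [chebA, Nat.factorial]
      rw [h1]
      simp [Polynomial.Chebyshev.T_one]
      ring
  | succ m ih =>
    obtain ⟨ih1, ih2⟩ := ih
    refine ⟨ih2, ?_⟩
    set t := (1 - x) / 2 with ht
    -- S (m+2) over range (m+3)
    have hsplit : ∑ k ∈ Finset.range (m + 3), chebA (m+2) k * t ^ k
        = (∑ k ∈ Finset.range (m + 2), chebA (m+2) (k+1) * t ^ (k+1)) + chebA (m+2) 0 * t ^ 0 :=
      Finset.sum_range_succ' _ _
    have hrec : ∑ k ∈ Finset.range (m + 2), chebA (m+2) (k+1) * t ^ (k+1)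
        = 2 * (∑ k ∈ Finset.range (m + 2), chebA (m+1) (k+1) * t ^ (k+1))
          - 4 * t * (∑ k ∈ Finset.range (m + 2), chebA (m+1) k * t ^ k)
          - ∑ k ∈ Finset.range (m + 2), chebA m (k+1) * t ^ (k+1) := by
      rw [Finset.mul_sum, Finset.mul_sum, ← Finset.sum_sub_distrib, ← Finset.sum_sub_distrib]
      refine Finset.sum_congr rfl fun k _ => ?_
      rw [chebA_rec m k]; ring
    have hA : ∑ k ∈ Finset.range (m + 2), chebA (m+1) (k+1) * t ^ (k+1)
        = (∑ k ∈ Finset.range (m + 2), chebA (m+1) k * t ^ k) - 1 := by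
      have h1 : ∑ k ∈ Finset.range (m + 3), chebA (m+1) k * t ^ k
          = (∑ k ∈ Finset.range (m + 2), chebA (m+1) (k+1) * t ^ (k+1)) + chebA (m+1) 0 * t ^ 0 :=
        Finset.sum_range_succ' _ _
      have h2 : ∑ k ∈ Finset.range (m + 3), chebA (m+1) k * t ^ k
          = ∑ k ∈ Finset.range (m + 2), chebA (m+1) k * t ^ k := by
        rw [Finset.sum_range_succ, chebA_eq_zero (by omega), zero_mul, add_zero]
      rw [chebA_zero, pow_zero, mul_one] at h1
      linarith [h1, h2]
    have hC : ∑ k ∈ Finset.range (m + 2), chebA m (k+1) * t ^ (k+1)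
        = (∑ k ∈ Finset.range (m + 1), chebA m k * t ^ k) - 1 := by
      have h1 : ∑ k ∈ Finset.range (m + 3), chebA m k * t ^ k
          = (∑ k ∈ Finset.range (m + 2), chebA m (k+1) * t ^ (k+1)) + chebA m 0 * t ^ 0 :=
        Finset.sum_range_succ' _ _
      have h2 : ∑ k ∈ Finset.range (m + 3), chebA m k * t ^ k
          = ∑ k ∈ Finset.range (m + 1), chebA m k * t ^ k := by
        rw [Finset.sum_range_succ, Finset.sum_range_succ, chebA_eq_zero (by omega),
          chebA_eq_zero (by omega)]
        ring
      rw [chebA_zero, pow_zero, mul_one] at h1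
      linarith [h1, h2]
    have key : ∑ k ∈ Finset.range (m + 3), chebA (m+2) k * t ^ k
        = 2 * x * (∑ k ∈ Finset.range (m + 2), chebA (m+1) k * t ^ k)
          - ∑ k ∈ Finset.range (m + 1), chebA m k * t ^ k := by
      rw [hsplit, hrec, hA, hC, chebA_zero]
      have : t = (1 - x) / 2 := ht
      rw [this]; ring
    have hT : (Polynomial.Chebyshev.T ℝ (((m:ℤ)+1) + 1)).eval x
        = 2 * x * (Polynomial.Chebyshev.T ℝ ((m:ℤ)+1)).eval x
          - (Polynomial.Chebyshev.T ℝ (m:ℤ)).eval x := by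
      have := Polynomial.Chebyshev.T_add_two ℝ (m:ℤ)
      rw [show ((m:ℤ)+1)+1 = (m:ℤ)+2 by ring, this]
      simp [Polynomial.eval_mul, Polynomial.eval_sub]
    have hcast : ((↑(m+1) : ℤ) + 1) = ((m:ℤ)+1)+1 := by push_cast; ring
    rw [show m + 1 + 2 = m + 3 from rfl, hcast, key, hT, ih1, ih2]


/-- The terminating Gauss hypergeometric representation
`₂F₁(n, −n, 1/2; (1−x)/2) = T_n(x)` of the Chebyshev polynomial of the first kind,
where `(a)_k = ∏_{j<k} (a + j)` is the rising factorial. -/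
theorem chebyshev_hypergeometric (n : ℕ) (x : ℝ) :
    ∑ k ∈ Finset.range (n + 1),
      ((∏ j ∈ Finset.range k, ((n : ℝ) + j)) * (∏ j ∈ Finset.range k, (-(n : ℝ) + j))
        / ((∏ j ∈ Finset.range k, ((1 : ℝ) / 2 + j)) * (Nat.factorial k : ℝ)))
        * ((1 - x) / 2) ^ k
      = (Polynomial.Chebyshev.T ℝ (n : ℤ)).eval x := by
  exact (cheb_pair x n).1
end

section
/- Let n ∈ ℕ and let w : (0,∞) × (0,∞) → ℝ, (t,s) ↦ w(t,s), be smooth and satisfy the radial hyperbolic heat equation ∂w/∂t = ∂²w/∂s² + (n−1)·coth s · ∂w/∂s on (0,∞) × (0,∞). Then the function v(t,s) = −(1/sinh s)·∂w/∂s(t,s) satisfies ∂v/∂t = ∂²v/∂s² + (n+1)·coth s · ∂v/∂s + n·v on (0,∞) × (0,∞). -/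
open Real Set

variable {E : Type*} [NormedAddCommGroup E] [NormedSpace ℝ E]

lemma hasDerivAt_partial_s' {W : ℝ × ℝ → E} {p : ℝ × ℝ}
    (h : DifferentiableAt ℝ W p) :
    HasDerivAt (fun s' => W (p.1, s')) (fderiv ℝ W p (0, 1)) p.2 := by
  have hL : HasDerivAt (fun s' : ℝ => ((p.1, s') : ℝ × ℝ)) ((0 : ℝ), (1 : ℝ)) p.2 :=
    (hasDerivAt_const _ _).prodMk (hasDerivAt_id _)
  exact h.hasFDerivAt.comp_hasDerivAt p.2 hL

lemma hasDerivAt_partial_t' {W : ℝ × ℝ → E} {p : ℝ × ℝ}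
    (h : DifferentiableAt ℝ W p) :
    HasDerivAt (fun t' => W (t', p.2)) (fderiv ℝ W p (1, 0)) p.1 := by
  have hL : HasDerivAt (fun t' : ℝ => ((t', p.2) : ℝ × ℝ)) ((1 : ℝ), (0 : ℝ)) p.1 :=
    (hasDerivAt_id _).prodMk (hasDerivAt_const _ _)
  exact h.hasFDerivAt.comp_hasDerivAt p.1 hL

lemma contDiffAt_fderiv_apply' {W : ℝ × ℝ → ℝ} {p : ℝ × ℝ} (u : ℝ × ℝ)
    (h : ContDiffAt ℝ (⊤ : ℕ∞) W p) :
    ContDiffAt ℝ (⊤ : ℕ∞) (fun q => fderiv ℝ W q u) p := by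
  have h1 : ContDiffAt ℝ (⊤ : ℕ∞) (fderiv ℝ W) p := h.fderiv_right (by norm_cast)
  exact (ContinuousLinearMap.apply ℝ ℝ u).contDiff.comp_contDiffAt p h1

lemma fderiv_fderiv_apply' {W : ℝ × ℝ → ℝ} {p : ℝ × ℝ} (u v : ℝ × ℝ)
    (h : ContDiffAt ℝ (⊤ : ℕ∞) W p) :
    fderiv ℝ (fun q => fderiv ℝ W q u) p v = fderiv ℝ (fderiv ℝ W) p v u := by
  have hsm : ContDiffAt ℝ (⊤ : ℕ∞) (fderiv ℝ W) p := h.fderiv_right (by norm_cast)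
  have hd : DifferentiableAt ℝ (fderiv ℝ W) p :=
    hsm.differentiableAt (by simp)
  have : (fun q => fderiv ℝ W q u) = (ContinuousLinearMap.apply ℝ ℝ u) ∘ (fderiv ℝ W) := rfl
  rw [this, fderiv_comp p (ContinuousLinearMap.apply ℝ ℝ u).differentiableAt hd]
  simp

lemma swap_partials' {W : ℝ × ℝ → ℝ} {p : ℝ × ℝ}
    (h : ContDiffAt ℝ (⊤ : ℕ∞) W p) :
    fderiv ℝ (fun q => fderiv ℝ W q (0, 1)) p (1, 0)
      = fderiv ℝ (fun q => fderiv ℝ W q (1, 0)) p (0, 1) := by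
  rw [fderiv_fderiv_apply' _ _ h, fderiv_fderiv_apply' _ _ h]
  exact (h.isSymmSndFDerivAt (by simp [minSmoothness_of_isRCLikeNormedField]; exact WithTop.coe_le_coe.mpr le_top)) _ _

/-- Millson descent recursion: if `w(t,s)` solves the radial heat equation
`∂w/∂t = ∂²w/∂s² + (n−1) coth s ∂w/∂s` on `(0,∞) × (0,∞)` and is smooth there, then
`v(t,s) = −(1/sinh s) ∂w/∂s` solves
`∂v/∂t = ∂²v/∂s² + (n+1) coth s ∂v/∂s + n v` on `(0,∞) × (0,∞)`. -/
theorem millson_descent (n : ℕ) (w : ℝ → ℝ → ℝ)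
    (hw : ContDiffOn ℝ (⊤ : ℕ∞) (fun p : ℝ × ℝ => w p.1 p.2) (Set.Ioi 0 ×ˢ Set.Ioi 0))
    (hheat : ∀ t > (0 : ℝ), ∀ s > (0 : ℝ),
      deriv (fun t' => w t' s) t
        = deriv (deriv (w t)) s
          + ((n : ℝ) - 1) * (Real.cosh s / Real.sinh s) * deriv (w t) s) :
    ∀ t > (0 : ℝ), ∀ s > (0 : ℝ),
      deriv (fun t' => -(1 / Real.sinh s) * deriv (w t') s) t
        = deriv (deriv (fun s' => -(1 / Real.sinh s') * deriv (w t) s')) s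
          + ((n : ℝ) + 1) * (Real.cosh s / Real.sinh s)
              * deriv (fun s' => -(1 / Real.sinh s') * deriv (w t) s') s
          + (n : ℝ) * (-(1 / Real.sinh s) * deriv (w t) s) := by
  intro t ht s hs
  have hne : Real.sinh s ≠ 0 := ne_of_gt (Real.sinh_pos_iff.mpr hs)
  have hUopen : IsOpen (Set.Ioi (0:ℝ) ×ˢ Set.Ioi (0:ℝ)) := isOpen_Ioi.prod isOpen_Ioi
  set W : ℝ × ℝ → ℝ := fun p => w p.1 p.2 with hWdef
  have hWat : ∀ {t' s' : ℝ}, 0 < t' → 0 < s' → ContDiffAt ℝ (⊤ : ℕ∞) W (t', s') := by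
    intro t' s' ht' hs'
    exact (hw.of_le (by simp)).contDiffAt (hUopen.mem_nhds (Set.mem_prod.2 ⟨ht', hs'⟩))
  set F : ℝ × ℝ → ℝ := fun q => fderiv ℝ W q (0,1) with hFdef
  set H : ℝ × ℝ → ℝ := fun q => fderiv ℝ W q (1,0) with hHdef
  set G : ℝ × ℝ → ℝ := fun q => fderiv ℝ F q (0,1) with hGdef
  have hFat : ∀ {t' s' : ℝ}, 0 < t' → 0 < s' → ContDiffAt ℝ (⊤ : ℕ∞) F (t', s') :=
    fun ht' hs' => contDiffAt_fderiv_apply' _ (hWat ht' hs')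
  have hdiff_top : ((⊤:ℕ∞) : WithTop ℕ∞) ≠ 0 := by simp
  -- first partial in s
  have hws : ∀ t' > (0:ℝ), ∀ s' > (0:ℝ), HasDerivAt (w t') (F (t', s')) s' := by
    intro t' ht' s' hs'
    exact hasDerivAt_partial_s' (p := (t', s')) ((hWat ht' hs').differentiableAt hdiff_top)
  have hderiv_s : ∀ t' > (0:ℝ), ∀ s' > (0:ℝ), deriv (w t') s' = F (t', s') :=
    fun t' ht' s' hs' => (hws t' ht' s' hs').deriv
  -- second partial in s
  have hFs : ∀ t' > (0:ℝ), ∀ s' > (0:ℝ), HasDerivAt (fun x => F (t', x)) (G (t', s')) s' := by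
    intro t' ht' s' hs'
    exact hasDerivAt_partial_s' (p := (t', s')) ((hFat ht' hs').differentiableAt hdiff_top)
  have hderiv_ss : ∀ t' > (0:ℝ), ∀ s' > (0:ℝ), deriv (deriv (w t')) s' = G (t', s') := by
    intro t' ht' s' hs'
    have hev : deriv (w t') =ᶠ[nhds s'] fun x => F (t', x) := by
      filter_upwards [Ioi_mem_nhds hs'] with x hx
      exact hderiv_s t' ht' x hx
    rw [hev.deriv_eq]
    exact (hFs t' ht' s' hs').deriv
  -- partial in t
  have hwt : ∀ s' > (0:ℝ), HasDerivAt (fun x => w x s') (H (t, s')) t := by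
    intro s' hs'
    exact hasDerivAt_partial_t' (p := (t, s')) ((hWat ht hs').differentiableAt hdiff_top)
  have hHeq : ∀ s' > (0:ℝ),
      H (t, s') = G (t, s') + ((n:ℝ) - 1) * (Real.cosh s' / Real.sinh s') * F (t, s') := by
    intro s' hs'
    rw [← (hwt s' hs').deriv, hheat t ht s' hs', hderiv_ss t ht s' hs', hderiv_s t ht s' hs']
  -- derivative of v in s at any point of Ioi 0
  have hV : ∀ s' > (0:ℝ), HasDerivAt (fun x => -(1 / Real.sinh x) * deriv (w t) x)
      (Real.cosh s' / (Real.sinh s')^2 * F (t, s') - (1 / Real.sinh s') * G (t, s')) s' := by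
    intro s' hs'
    have hne' : Real.sinh s' ≠ 0 := ne_of_gt (Real.sinh_pos_iff.mpr hs')
    have h1 : HasDerivAt (fun x => -(1 / Real.sinh x)) (Real.cosh s' / (Real.sinh s')^2) s' := by
      have := ((Real.hasDerivAt_sinh s').inv hne').neg; simp only [one_div]; exact this.congr_deriv (by ring)
    have hprod := h1.mul (hFs t ht s' hs')
    have h2 : HasDerivAt (fun x => -(1 / Real.sinh x) * F (t, x))
        (Real.cosh s' / (Real.sinh s')^2 * F (t, s') - (1 / Real.sinh s') * G (t, s')) s' := by
      exact hprod.congr_deriv (by ring)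
    refine h2.congr_of_eventuallyEq ?_
    filter_upwards [Ioi_mem_nhds hs'] with x hx
    rw [hderiv_s t ht x hx]
  have hVs : deriv (fun x => -(1 / Real.sinh x) * deriv (w t) x) s
      = Real.cosh s / (Real.sinh s)^2 * F (t, s) - (1 / Real.sinh s) * G (t, s) := (hV s hs).deriv
  -- third partial
  set T : ℝ := fderiv ℝ G (t, s) (0,1) with hTdef
  have hGdiffAt : DifferentiableAt ℝ G (t, s) :=
    (contDiffAt_fderiv_apply' _ (hFat ht hs)).differentiableAt hdiff_top
  have hGs : HasDerivAt (fun x => G (t, x)) T s :=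
    hasDerivAt_partial_s' (p := (t, s)) hGdiffAt
  -- second derivative of v at s
  have a1 : HasDerivAt (fun x => Real.cosh x / (Real.sinh x)^2)
      ((Real.sinh s * (Real.sinh s)^2 - Real.cosh s * (2 * Real.sinh s ^ 1 * Real.cosh s))
        / ((Real.sinh s)^2)^2) s :=
    (Real.hasDerivAt_cosh s).div ((Real.hasDerivAt_sinh s).pow 2) (pow_ne_zero 2 hne)
  have b1 : HasDerivAt (fun x => 1 / Real.sinh x) (-Real.cosh s / (Real.sinh s)^2) s := by
    have := (Real.hasDerivAt_sinh s).inv hne; simp only [one_div]; exact this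
  have hφ : HasDerivAt (fun x => Real.cosh x / (Real.sinh x)^2 * F (t, x)
        - (1 / Real.sinh x) * G (t, x))
      (((Real.sinh s * (Real.sinh s)^2 - Real.cosh s * (2 * Real.sinh s ^ 1 * Real.cosh s))
          / ((Real.sinh s)^2)^2 * F (t, s) + Real.cosh s / (Real.sinh s)^2 * G (t, s))
        - (-Real.cosh s / (Real.sinh s)^2 * G (t, s) + (1 / Real.sinh s) * T)) s :=
    (a1.mul (hFs t ht s hs)).sub (b1.mul hGs)
  have hVss : deriv (deriv (fun x => -(1 / Real.sinh x) * deriv (w t) x)) s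
      = ((Real.sinh s * (Real.sinh s)^2 - Real.cosh s * (2 * Real.sinh s ^ 1 * Real.cosh s))
          / ((Real.sinh s)^2)^2 * F (t, s) + Real.cosh s / (Real.sinh s)^2 * G (t, s))
        - (-Real.cosh s / (Real.sinh s)^2 * G (t, s) + (1 / Real.sinh s) * T) := by
    have hev : deriv (fun x => -(1 / Real.sinh x) * deriv (w t) x)
        =ᶠ[nhds s] fun x => Real.cosh x / (Real.sinh x)^2 * F (t, x)
          - (1 / Real.sinh x) * G (t, x) := by
      filter_upwards [Ioi_mem_nhds hs] with x hx
      exact (hV x hx).deriv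
    rw [hev.deriv_eq]
    exact hφ.deriv
  -- left-hand side
  have hFdiffAt : DifferentiableAt ℝ F (t, s) := (hFat ht hs).differentiableAt hdiff_top
  have hL : deriv (fun t' => -(1 / Real.sinh s) * deriv (w t') s) t
      = -(1 / Real.sinh s) * fderiv ℝ F (t, s) (1, 0) := by
    have hFt : HasDerivAt (fun x => F (x, s)) (fderiv ℝ F (t, s) (1, 0)) t :=
      hasDerivAt_partial_t' (p := (t, s)) hFdiffAt
    have h1 := hFt.const_mul (-(1 / Real.sinh s))
    have h2 : HasDerivAt (fun t' => -(1 / Real.sinh s) * deriv (w t') s)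
        (-(1 / Real.sinh s) * fderiv ℝ F (t, s) (1, 0)) t := by
      refine h1.congr_of_eventuallyEq ?_
      filter_upwards [Ioi_mem_nhds ht] with x hx
      rw [hderiv_s x hx s hs]
    exact h2.deriv
  -- mixed partials swap
  have hswap : fderiv ℝ F (t, s) (1, 0) = fderiv ℝ H (t, s) (0, 1) :=
    swap_partials' (hWat ht hs)
  -- compute fderiv H (0,1) via heat equation
  have hHdiffAt : DifferentiableAt ℝ H (t, s) :=
    (contDiffAt_fderiv_apply' _ (hWat ht hs)).differentiableAt hdiff_top
  have hHs : HasDerivAt (fun x => H (t, x)) (fderiv ℝ H (t, s) (0, 1)) s :=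
    hasDerivAt_partial_s' (p := (t, s)) hHdiffAt
  have hcoth : HasDerivAt (fun x => Real.cosh x / Real.sinh x)
      ((Real.sinh s * Real.sinh s - Real.cosh s * Real.cosh s) / (Real.sinh s)^2) s :=
    (Real.hasDerivAt_cosh s).div (Real.hasDerivAt_sinh s) hne
  have hRHS : HasDerivAt (fun x => G (t, x) + ((n:ℝ) - 1) * (Real.cosh x / Real.sinh x) * F (t, x))
      (T + ((((n:ℝ) - 1) * ((Real.sinh s * Real.sinh s - Real.cosh s * Real.cosh s)
          / (Real.sinh s)^2)) * F (t, s)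
        + (((n:ℝ) - 1) * (Real.cosh s / Real.sinh s)) * G (t, s))) s :=
    hGs.add ((hcoth.const_mul ((n:ℝ) - 1)).mul (hFs t ht s hs))
  have hHval : T + ((((n:ℝ) - 1) * ((Real.sinh s * Real.sinh s - Real.cosh s * Real.cosh s)
          / (Real.sinh s)^2)) * F (t, s)
        + (((n:ℝ) - 1) * (Real.cosh s / Real.sinh s)) * G (t, s))
      = fderiv ℝ H (t, s) (0, 1) := by
    have hev : (fun x => H (t, x)) =ᶠ[nhds s]
        fun x => G (t, x) + ((n:ℝ) - 1) * (Real.cosh x / Real.sinh x) * F (t, x) := by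
      filter_upwards [Ioi_mem_nhds hs] with x hx
      exact hHeq x hx
    exact (hRHS.congr_of_eventuallyEq hev).unique hHs
  rw [hL, hswap, ← hHval, hVss, hVs, hderiv_s t ht s hs]
  have hch : Real.cosh s ^ 2 = 1 + Real.sinh s ^ 2 := by
    have := Real.cosh_sq_sub_sinh_sq s; linarith
  field_simp
  ring
end
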